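/- arXiv:2409.09644 — 5 statements merged into one kernel-verified Lean document; each statement's English description precedes it below -/
import Mathlib

section
/- Let K be a compact convex set regularly embedded in a locally convex space E (via φ ∈ E*, K ⊆ φ⁻¹({1})), with induced positive cone K̃ and order on E. If (E, K̃) is a lattice, then for any r > 0 and a ∈ E, the intersection K ∩ (rK + a) is either empty, or equal to tK + c where c = 0 ∨ a and t = 1 − φ(c) ≥ 0. -/
/-- The cone generated by a set `K`. -/
def coneOf {E : Type*} [AddCommGroup E] [Module ℝ E] (K : Set E) : Set E :=
  {y : E | ∃ α : ℝ, 0 ≤ α ∧ ∃ x ∈ K, y = α • x}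

/-- The partial order on `E` induced by the cone generated by `K`. -/
def coneLe {E : Type*} [AddCommGroup E] [Module ℝ E] (K : Set E) (x y : E) : Prop :=
  y - x ∈ coneOf K

/-!
Since `φ = 1` on `K` and `φ (α • x) = α` for `x ∈ K`, the translate-and-dilate `t • K + b`
(`t ≥ 0`) is exactly `{w | b ≤ w ∧ φ w = t + φ b}`. If `z` lies in `K ∩ (r • K + a)`, then
`φ a = 1 - r`, so the intersection is `{w | 0 ≤ w ∧ a ≤ w ∧ φ w = 1} = {w | c ≤ w ∧ φ w = 1}`,
which is `(1 - φ c) • K + c`; and `1 - φ c = φ (z - c) ≥ 0`.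
-/

open scoped Pointwise

section

variable {E : Type*} [AddCommGroup E] [Module ℝ E] {K : Set E}

theorem add_mem_coneOf (hK : Convex ℝ K) {u v : E} (hu : u ∈ coneOf K) (hv : v ∈ coneOf K) :
    u + v ∈ coneOf K := by
  obtain ⟨α, hα, x, hx, rfl⟩ := hu
  obtain ⟨β, hβ, y, hy, rfl⟩ := hv
  have hmem : α • x + β • y ∈ (α + β) • K := by
    rw [hK.add_smul hα hβ]
    exact Set.add_mem_add (Set.smul_mem_smul_set hx) (Set.smul_mem_smul_set hy)
  obtain ⟨z, hz, hzxy⟩ := hmem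
  exact ⟨α + β, add_nonneg hα hβ, z, hz, hzxy.symm⟩

theorem coneLe.trans (hK : Convex ℝ K) {x y z : E} (hxy : coneLe K x y) (hyz : coneLe K y z) :
    coneLe K x z := by
  unfold coneLe at *
  rw [← sub_add_sub_cancel z y x]
  exact add_mem_coneOf hK hyz hxy

theorem coneLe_iff_of_isLUB (hK : Convex ℝ K) {a b c w : E}
    (hc : coneLe K a c ∧ coneLe K b c ∧ ∀ d, coneLe K a d → coneLe K b d → coneLe K c d) :
    coneLe K c w ↔ coneLe K a w ∧ coneLe K b w :=
  ⟨fun hcw => ⟨hc.1.trans hK hcw, hc.2.1.trans hK hcw⟩, fun h => hc.2.2 w h.1 h.2⟩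

variable {F : Type*} [FunLike F E ℝ] [LinearMapClass F ℝ E ℝ] {φ : F}

theorem coneLe.map_le (hφ : ∀ x ∈ K, φ x = 1) {x y : E} (hxy : coneLe K x y) : φ x ≤ φ y := by
  obtain ⟨α, hα, k, hk, hyx⟩ := hxy
  have : φ y - φ x = α := by rw [← map_sub, hyx, map_smul, hφ k hk, smul_eq_mul, mul_one]
  linarith

theorem mem_image_smul_add_iff_coneLe (hφ : ∀ x ∈ K, φ x = 1) {t : ℝ} (ht : 0 ≤ t) {b w : E} :
    w ∈ (fun x => t • x + b) '' K ↔ coneLe K b w ∧ φ w = t + φ b := by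
  constructor
  · rintro ⟨x, hx, rfl⟩
    refine ⟨⟨t, ht, x, hx, add_sub_cancel_right _ _⟩, ?_⟩
    rw [map_add, map_smul, hφ x hx, smul_eq_mul, mul_one]
  · rintro ⟨⟨α, -, x, hx, hwb⟩, hφw⟩
    obtain rfl : α = t := by
      have := congrArg φ hwb
      rw [map_sub, map_smul, hφ x hx, smul_eq_mul, mul_one] at this
      linarith
    exact ⟨x, hx, show α • x + b = w by rw [← hwb, sub_add_cancel]⟩

theorem mem_iff_coneLe_zero (hφ : ∀ x ∈ K, φ x = 1) {w : E} :
    w ∈ K ↔ coneLe K 0 w ∧ φ w = 1 := by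
  simpa using mem_image_smul_add_iff_coneLe (b := (0 : E)) (w := w) hφ zero_le_one

end

theorem lattice_implies_homothety_intersection_general
    {E : Type*} [AddCommGroup E] [Module ℝ E] [TopologicalSpace E]
    (K : Set E) (hKconv : Convex ℝ K)
    (φ : E →L[ℝ] ℝ) (hφ : ∀ x ∈ K, φ x = 1)
    (r : ℝ) (hr : 0 < r) (a : E) (c : E)
    (hc : coneLe K 0 c ∧ coneLe K a c ∧
      ∀ d : E, coneLe K 0 d → coneLe K a d → coneLe K c d) :
    K ∩ ((fun x => r • x + a) '' K) = ∅ ∨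
      (0 ≤ 1 - φ c ∧
        K ∩ ((fun x => r • x + a) '' K) = (fun x => (1 - φ c) • x + c) '' K) := by
  rcases (K ∩ ((fun x => r • x + a) '' K)).eq_empty_or_nonempty with h | ⟨z, hz⟩
  · exact Or.inl h
  have hmem : ∀ w, w ∈ K ∩ ((fun x => r • x + a) '' K) ↔ coneLe K c w ∧ φ w = 1 := by
    have hφa : r + φ a = 1 := by
      rw [Set.mem_inter_iff, mem_iff_coneLe_zero hφ, mem_image_smul_add_iff_coneLe hφ hr.le] at hz
      linarith [hz.1.2, hz.2.2]
    intro w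
    rw [Set.mem_inter_iff, mem_iff_coneLe_zero hφ, mem_image_smul_add_iff_coneLe hφ hr.le, hφa,
      coneLe_iff_of_isLUB hKconv hc]
    tauto
  have ht : 0 ≤ 1 - φ c := by
    obtain ⟨hcz, hφz⟩ := (hmem z).1 hz
    linarith [hcz.map_le hφ]
  refine Or.inr ⟨ht, Set.ext fun w => ?_⟩
  rw [hmem, mem_image_smul_add_iff_coneLe hφ ht, sub_add_cancel]

/-- If `(E, K̃)` is a lattice, then for `r > 0` and `a ∈ E`, the intersection
`K ∩ (r K + a)` is either empty or equals `(1 − φ c) K + c` where `c = 0 ∨ a`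
(and `1 − φ c ≥ 0`). -/
theorem lattice_implies_homothety_intersection
    {E : Type*} [AddCommGroup E] [Module ℝ E] [TopologicalSpace E]
    [IsTopologicalAddGroup E] [ContinuousSMul ℝ E] [LocallyConvexSpace ℝ E] [T2Space E]
    (K : Set E) (hKc : IsCompact K) (hKconv : Convex ℝ K) (hKne : K.Nonempty)
    (φ : E →L[ℝ] ℝ) (hφ : ∀ x ∈ K, φ x = 1)
    (hlat : ∀ a b : E, ∃ c : E, coneLe K a c ∧ coneLe K b c ∧
      ∀ d : E, coneLe K a d → coneLe K b d → coneLe K c d)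
    (r : ℝ) (hr : 0 < r) (a : E) (c : E)
    (hc : coneLe K 0 c ∧ coneLe K a c ∧
      ∀ d : E, coneLe K 0 d → coneLe K a d → coneLe K c d) :
    K ∩ ((fun x => r • x + a) '' K) = ∅ ∨
      (0 ≤ 1 - φ c ∧
        K ∩ ((fun x => r • x + a) '' K) = (fun x => (1 - φ c) • x + c) '' K) :=
  lattice_implies_homothety_intersection_general K hKconv φ hφ r hr a c hc
end

section
/- Let K ⊆ φ⁻¹({1}) be a regularly embedded compact convex set with cone K̃ ordering E, and assume the refinement property: whenever positive elements of E have equal finite sums there is a common refinement matrix of positive elements. Then K satisfies the Riesz decomposition property for convex combinations: if x = Σ_{j=1}^n α_j x_j = Σ_{i=1}^m β_i y_i are two proper convex combinations in K (all α_j, β_i > 0, x_j, y_i ∈ K), then there exist γ_{ij} ≥ 0 summing to 1 and points z_{ij} ∈ K with x = Σ_{ij} γ_{ij} z_{ij}, α_j = Σ_i γ_{ij}, β_i = Σ_j γ_{ij}, x_j = Σ_i α_j⁻¹ γ_{ij} z_{ij}, and y_i = Σ_j β_i⁻¹ γ_{ij} z_{ij}. -/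
/-- For a regularly embedded convex set `K ⊆ φ⁻¹({1})`, the refinement property of
the cone order implies the Riesz decomposition property for proper convex combinations
in `K`. -/
theorem refinement_implies_convex_riesz_decomposition
    {E : Type*} [AddCommGroup E] [Module ℝ E]
    (φ : E →ₗ[ℝ] ℝ) (K : Set E) (hKconv : Convex ℝ K) (hφ : ∀ x ∈ K, φ x = 1)
    (href : ∀ (n m : ℕ) (x : Fin n → E) (y : Fin m → E),
      (∀ i, x i ∈ coneOf K) → (∀ j, y j ∈ coneOf K) → ∑ i, x i = ∑ j, y j →
      ∃ z : Fin n → Fin m → E, (∀ i j, z i j ∈ coneOf K) ∧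
        (∀ i, x i = ∑ j, z i j) ∧ (∀ j, y j = ∑ i, z i j)) :
    ∀ (n m : ℕ) (α : Fin n → ℝ) (β : Fin m → ℝ) (x : Fin n → E) (y : Fin m → E),
      (∀ j, 0 < α j) → (∀ i, 0 < β i) → ∑ j, α j = 1 → ∑ i, β i = 1 →
      (∀ j, x j ∈ K) → (∀ i, y i ∈ K) →
      ∑ j, α j • x j = ∑ i, β i • y i →
      ∃ (γ : Fin m → Fin n → ℝ) (z : Fin m → Fin n → E),
        (∀ i j, 0 ≤ γ i j) ∧ (∀ i j, z i j ∈ K) ∧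
        (∑ i, ∑ j, γ i j) = 1 ∧
        (∑ j, α j • x j) = ∑ i, ∑ j, γ i j • z i j ∧
        (∀ j, α j = ∑ i, γ i j) ∧ (∀ i, β i = ∑ j, γ i j) ∧
        (∀ j, x j = ∑ i, ((α j)⁻¹ * γ i j) • z i j) ∧
        (∀ i, y i = ∑ j, ((β i)⁻¹ * γ i j) • z i j) := by
  intro n m α β x y hα hβ hsα hsβ hx hy heq
  obtain ⟨z', hz'cone, hz'x, hz'y⟩ := href n m (fun j => α j • x j) (fun i => β i • y i)
    (fun j => ⟨α j, (hα j).le, x j, hx j, rfl⟩)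
    (fun i => ⟨β i, (hβ i).le, y i, hy i, rfl⟩) heq
  choose γ' hγ' w hw hzw using hz'cone
  have hφz : ∀ j i, φ (z' j i) = γ' j i := fun j i => by
    rw [hzw j i, map_smul, hφ _ (hw j i), smul_eq_mul, mul_one]
  have halpha : ∀ j, α j = ∑ i, γ' j i := fun j => by
    have h := congrArg φ (hz'x j)
    simpa [map_smul, hφ _ (hx j), hφz] using h
  have hbeta : ∀ i, β i = ∑ j, γ' j i := fun i => by
    have h := congrArg φ (hz'y i)
    simpa [map_smul, hφ _ (hy i), hφz] using h
  refine ⟨fun i j => γ' j i, fun i j => w j i, fun i j => hγ' j i, fun i j => hw j i,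
    ?_, ?_, fun j => halpha j, fun i => hbeta i, ?_, ?_⟩
  · rw [← hsβ]
    exact Finset.sum_congr rfl fun i _ => (hbeta i).symm
  · rw [Finset.sum_comm]
    exact Finset.sum_congr rfl fun j _ => by
      rw [hz'x j]
      exact Finset.sum_congr rfl fun i _ => by rw [← hzw]
  · intro j
    have h1 : x j = (α j)⁻¹ • (α j • x j) := (inv_smul_smul₀ (hα j).ne' (x j)).symm
    rw [h1, hz'x j, Finset.smul_sum]
    exact Finset.sum_congr rfl fun i _ => by rw [hzw, smul_smul]
  · intro i
    have h1 : y i = (β i)⁻¹ • (β i • y i) := (inv_smul_smul₀ (hβ i).ne' (y i)).symm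
    rw [h1, hz'y i, Finset.smul_sum]
    exact Finset.sum_congr rfl fun j _ => by rw [hzw, smul_smul]
end

section
/- Let K ⊆ φ⁻¹({1}) be a regularly embedded compact convex set with cone K̃ ordering E. If K satisfies the Riesz decomposition property for proper convex combinations (condition (iii) of the simplex characterization), then E has the refinement property: whenever x̄_1,...,x̄_n, ȳ_1,...,ȳ_m are positive elements with Σ x̄_i = Σ ȳ_j, there exist z̄_{ij} ≥ 0 with x̄_i = Σ_j z̄_{ij} and ȳ_j = Σ_i z̄_{ij}. -/
/-- Auxiliary: a sum over a fintype equals the sum over the subtype of a predicate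
outside of which the function vanishes. -/
theorem sum_subtype_of_support {ι M : Type*} [Fintype ι] [AddCommMonoid M] (p : ι → Prop)
    [DecidablePred p] [Fintype (Subtype p)] (f : ι → M)
    (h : ∀ i, ¬ p i → f i = 0) : ∑ i, f i = ∑ q : Subtype p, f q := by
  rw [← Finset.sum_filter_of_ne (p := p) (fun x _ hfx => by_contra fun hp => hfx (h x hp)),
    ← Finset.sum_subtype_eq_sum_filter, Finset.subtype_univ]

set_option maxHeartbeats 1000000 in
/-- For a regularly embedded convex set `K ⊆ φ⁻¹({1})`, the Riesz decomposition
property for proper convex combinations in `K` implies the refinement property of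
the cone order on `E`. -/
theorem convex_riesz_decomposition_implies_refinement
    {E : Type*} [AddCommGroup E] [Module ℝ E]
    (φ : E →ₗ[ℝ] ℝ) (K : Set E) (hKconv : Convex ℝ K) (hKne : K.Nonempty)
    (hφ : ∀ x ∈ K, φ x = 1)
    (hzero : ∀ e ∈ coneOf K, φ e = 0 → e = 0)
    (hone : ∀ e ∈ coneOf K, φ e = 1 → e ∈ K)
    (hrdp : ∀ (n m : ℕ) (α : Fin n → ℝ) (β : Fin m → ℝ) (x : Fin n → E) (y : Fin m → E),
      (∀ j, 0 < α j) → (∀ i, 0 < β i) → ∑ j, α j = 1 → ∑ i, β i = 1 →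
      (∀ j, x j ∈ K) → (∀ i, y i ∈ K) →
      ∑ j, α j • x j = ∑ i, β i • y i →
      ∃ (γ : Fin m → Fin n → ℝ) (z : Fin m → Fin n → E),
        (∀ i j, 0 ≤ γ i j) ∧ (∀ i j, z i j ∈ K) ∧
        (∀ j, α j = ∑ i, γ i j) ∧ (∀ i, β i = ∑ j, γ i j) ∧
        (∀ j, x j = ∑ i, ((α j)⁻¹ * γ i j) • z i j) ∧
        (∀ i, y i = ∑ j, ((β i)⁻¹ * γ i j) • z i j)) :
    ∀ (n m : ℕ) (x : Fin n → E) (y : Fin m → E),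
      (∀ i, x i ∈ coneOf K) → (∀ j, y j ∈ coneOf K) → ∑ i, x i = ∑ j, y j →
      ∃ z : Fin n → Fin m → E, (∀ i j, z i j ∈ coneOf K) ∧
        (∀ i, x i = ∑ j, z i j) ∧ (∀ j, y j = ∑ i, z i j) := by
  classical
  intro n m x y hx hy hsum
  obtain ⟨kK, hkK⟩ := hKne
  have hzeroCone : (0 : E) ∈ coneOf K := ⟨0, le_rfl, kK, hkK, (zero_smul ℝ kK).symm⟩
  choose a ha u hu hxu using hx
  choose b hb v hv hyv using hy
  set S : ℝ := ∑ i, a i with hSdef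
  have hbS : ∑ j, b j = S := by
    have h1 : φ (∑ i, x i) = S := by
      rw [map_sum]
      exact Finset.sum_congr rfl fun i _ => by
        rw [hxu i, map_smul, hφ _ (hu i)]; simp
    have h2 : φ (∑ j, y j) = ∑ j, b j := by
      rw [map_sum]
      exact Finset.sum_congr rfl fun j _ => by
        rw [hyv j, map_smul, hφ _ (hv j)]; simp
    rw [← h2, ← hsum, h1]
  have hS0 : 0 ≤ S := Finset.sum_nonneg fun i _ => ha i
  rcases eq_or_lt_of_le hS0 with hS0' | hSpos
  · -- everything is zero
    have hax : ∀ i, x i = 0 := by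
      intro i
      have : a i = 0 :=
        (Finset.sum_eq_zero_iff_of_nonneg fun i _ => ha i).1 hS0'.symm i (Finset.mem_univ i)
      rw [hxu i, this, zero_smul]
    have hby : ∀ j, y j = 0 := by
      intro j
      have : b j = 0 :=
        (Finset.sum_eq_zero_iff_of_nonneg fun j _ => hb j).1 (hbS.trans hS0'.symm) j
          (Finset.mem_univ j)
      rw [hyv j, this, zero_smul]
    exact ⟨fun _ _ => 0, fun _ _ => hzeroCone,
      fun i => by rw [hax i]; simp, fun j => by rw [hby j]; simp⟩
  · -- S > 0
    have hSne : S ≠ 0 := ne_of_gt hSpos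
    set P : Fin n → Prop := fun i => 0 < a i with hPdef
    set Q : Fin m → Prop := fun j => 0 < b j with hQdef
    set eP : Fin (Fintype.card (Subtype P)) ≃ Subtype P := (Fintype.equivFin (Subtype P)).symm
      with hePdef
    set eQ : Fin (Fintype.card (Subtype Q)) ≃ Subtype Q := (Fintype.equivFin (Subtype Q)).symm
      with heQdef
    set α : Fin (Fintype.card (Subtype P)) → ℝ := fun k => a ((eP k : Subtype P) : Fin n) / S
      with hαdef
    set β : Fin (Fintype.card (Subtype Q)) → ℝ := fun k => b ((eQ k : Subtype Q) : Fin m) / S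
      with hβdef
    have hαpos : ∀ k, 0 < α k := fun k => div_pos (eP k).2 hSpos
    have hβpos : ∀ k, 0 < β k := fun k => div_pos (eQ k).2 hSpos
    have hsuma : ∑ k, a ((eP k : Subtype P) : Fin n) = S := by
      rw [Equiv.sum_comp eP (fun q : Subtype P => a (q : Fin n))]
      rw [hSdef, sum_subtype_of_support P a
        (fun i hi => le_antisymm (not_lt.1 hi) (ha i))]
    have hsumb : ∑ k, b ((eQ k : Subtype Q) : Fin m) = S := by
      rw [Equiv.sum_comp eQ (fun q : Subtype Q => b (q : Fin m))]
      rw [← hbS, sum_subtype_of_support Q b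
        (fun j hj => le_antisymm (not_lt.1 hj) (hb j))]
    have hα1 : ∑ k, α k = 1 := by
      rw [hαdef]
      rw [← Finset.sum_div, hsuma, div_self hSne]
    have hβ1 : ∑ k, β k = 1 := by
      rw [hβdef]
      rw [← Finset.sum_div, hsumb, div_self hSne]
    have hsmulx : ∑ k, α k • u ((eP k : Subtype P) : Fin n) = S⁻¹ • ∑ i, x i := by
      have : ∀ k, α k • u ((eP k : Subtype P) : Fin n)
          = S⁻¹ • (a ((eP k : Subtype P) : Fin n) • u ((eP k : Subtype P) : Fin n)) := by
        intro k
        rw [smul_smul, hαdef]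
        congr 1
        simp only [div_eq_inv_mul]
      rw [Finset.sum_congr rfl fun k _ => this k, ← Finset.smul_sum]
      congr 1
      rw [Equiv.sum_comp eP (fun q : Subtype P => a (q : Fin n) • u (q : Fin n))]
      rw [← sum_subtype_of_support P (fun i => a i • u i)
        (fun i hi => show a i • u i = 0 by
          rw [le_antisymm (not_lt.1 hi) (ha i), zero_smul])]
      exact Finset.sum_congr rfl fun i _ => (hxu i).symm
    have hsmuly : ∑ k, β k • v ((eQ k : Subtype Q) : Fin m) = S⁻¹ • ∑ j, y j := by
      have : ∀ k, β k • v ((eQ k : Subtype Q) : Fin m)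
          = S⁻¹ • (b ((eQ k : Subtype Q) : Fin m) • v ((eQ k : Subtype Q) : Fin m)) := by
        intro k
        rw [smul_smul, hβdef]
        congr 1
        simp only [div_eq_inv_mul]
      rw [Finset.sum_congr rfl fun k _ => this k, ← Finset.smul_sum]
      congr 1
      rw [Equiv.sum_comp eQ (fun q : Subtype Q => b (q : Fin m) • v (q : Fin m))]
      rw [← sum_subtype_of_support Q (fun j => b j • v j)
        (fun j hj => show b j • v j = 0 by
          rw [le_antisymm (not_lt.1 hj) (hb j), zero_smul])]
      exact Finset.sum_congr rfl fun j _ => (hyv j).symm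
    obtain ⟨γ, w, hγ0, hwK, hαγ, hβγ, huw, hvw⟩ :=
      hrdp (Fintype.card (Subtype P)) (Fintype.card (Subtype Q)) α β
        (fun k => u ((eP k : Subtype P) : Fin n)) (fun k => v ((eQ k : Subtype Q) : Fin m))
        hαpos hβpos hα1 hβ1 (fun k => hu _) (fun k => hv _)
        (by rw [hsmulx, hsmuly, hsum])
    refine ⟨fun i j => if h : P i ∧ Q j then
        (S * γ (eQ.symm ⟨j, h.2⟩) (eP.symm ⟨i, h.1⟩)) • w (eQ.symm ⟨j, h.2⟩) (eP.symm ⟨i, h.1⟩)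
      else 0, ?_, ?_, ?_⟩
    · intro i j
      beta_reduce
      by_cases h : P i ∧ Q j
      · rw [dif_pos h]
        exact ⟨_, mul_nonneg hSpos.le (hγ0 _ _), _, hwK _ _, rfl⟩
      · rw [dif_neg h]; exact hzeroCone
    · intro i
      beta_reduce
      by_cases hi : P i
      · rw [sum_subtype_of_support Q _ (fun j hj => dif_neg fun h => hj h.2)]
        have hstep : ∀ q : Subtype Q,
            (if h : P i ∧ Q (q : Fin m) then
              (S * γ (eQ.symm ⟨(q : Fin m), h.2⟩) (eP.symm ⟨i, h.1⟩)) •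
                w (eQ.symm ⟨(q : Fin m), h.2⟩) (eP.symm ⟨i, h.1⟩) else 0)
            = (S * γ (eQ.symm q) (eP.symm ⟨i, hi⟩)) • w (eQ.symm q) (eP.symm ⟨i, hi⟩) := by
          intro q
          rw [dif_pos ⟨hi, q.2⟩]
        rw [Finset.sum_congr rfl fun q _ => hstep q]
        set i' := eP.symm ⟨i, hi⟩ with hi'def
        have hre : ∑ q : Subtype Q, (S * γ (eQ.symm q) i') • w (eQ.symm q) i'
            = ∑ k, (S * γ k i') • w k i' :=
          Fintype.sum_equiv eQ.symm _ _ (fun q => rfl)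
        rw [hre]
        have hai : a ((eP i' : Subtype P) : Fin n) = a i := by
          rw [hi'def, eP.apply_symm_apply]
        have hui : u ((eP i' : Subtype P) : Fin n) = u i := by
          rw [hi'def, eP.apply_symm_apply]
        have haine : a i ≠ 0 := ne_of_gt hi
        have hαi' : α i' = a i / S := by
          show a ((eP i' : Subtype P) : Fin n) / S = a i / S
          rw [hai]
        have hcoef : ∀ k, a i * ((α i')⁻¹ * γ k i') = S * γ k i' := by
          intro k
          rw [hαi', ← mul_assoc]
          congr 1
          field_simp
        calc x i = a i • u i := hxu i
          _ = a i • ∑ k, ((α i')⁻¹ * γ k i') • w k i' := by rw [← hui, huw i']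
          _ = ∑ k, (a i * ((α i')⁻¹ * γ k i')) • w k i' := by
              rw [Finset.smul_sum]
              exact Finset.sum_congr rfl fun k _ => by rw [smul_smul]
          _ = ∑ k, (S * γ k i') • w k i' := by
              exact Finset.sum_congr rfl fun k _ => by rw [hcoef k]
      · have hai : a i = 0 := le_antisymm (not_lt.1 hi) (ha i)
        have : x i = 0 := by rw [hxu i, hai, zero_smul]
        rw [this]
        exact (Finset.sum_eq_zero fun j _ => dif_neg fun h => hi h.1).symm
    · intro j
      beta_reduce
      by_cases hj : Q j
      · rw [sum_subtype_of_support P _ (fun i hi => dif_neg fun h => hi h.1)]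
        have hstep : ∀ q : Subtype P,
            (if h : P (q : Fin n) ∧ Q j then
              (S * γ (eQ.symm ⟨j, h.2⟩) (eP.symm ⟨(q : Fin n), h.1⟩)) •
                w (eQ.symm ⟨j, h.2⟩) (eP.symm ⟨(q : Fin n), h.1⟩) else 0)
            = (S * γ (eQ.symm ⟨j, hj⟩) (eP.symm q)) • w (eQ.symm ⟨j, hj⟩) (eP.symm q) := by
          intro q
          rw [dif_pos ⟨q.2, hj⟩]
        rw [Finset.sum_congr rfl fun q _ => hstep q]
        set j' := eQ.symm ⟨j, hj⟩ with hj'def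
        have hre : ∑ q : Subtype P, (S * γ j' (eP.symm q)) • w j' (eP.symm q)
            = ∑ k, (S * γ j' k) • w j' k :=
          Fintype.sum_equiv eP.symm _ _ (fun q => rfl)
        rw [hre]
        have hbj : b ((eQ j' : Subtype Q) : Fin m) = b j := by
          rw [hj'def, eQ.apply_symm_apply]
        have hvj : v ((eQ j' : Subtype Q) : Fin m) = v j := by
          rw [hj'def, eQ.apply_symm_apply]
        have hbjne : b j ≠ 0 := ne_of_gt hj
        have hβj' : β j' = b j / S := by
          show b ((eQ j' : Subtype Q) : Fin m) / S = b j / S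
          rw [hbj]
        have hcoef : ∀ k, b j * ((β j')⁻¹ * γ j' k) = S * γ j' k := by
          intro k
          rw [hβj', ← mul_assoc]
          congr 1
          field_simp
        calc y j = b j • v j := hyv j
          _ = b j • ∑ k, ((β j')⁻¹ * γ j' k) • w j' k := by rw [← hvj, hvw j']
          _ = ∑ k, (b j * ((β j')⁻¹ * γ j' k)) • w j' k := by
              rw [Finset.smul_sum]
              exact Finset.sum_congr rfl fun k _ => by rw [smul_smul]
          _ = ∑ k, (S * γ j' k) • w j' k := by
              exact Finset.sum_congr rfl fun k _ => by rw [hcoef k]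
      · have hbj : b j = 0 := le_antisymm (not_lt.1 hj) (hb j)
        have : y j = 0 := by rw [hyv j, hbj, zero_smul]
        rw [this]
        exact (Finset.sum_eq_zero fun i _ => dif_neg fun h => hj h.2).symm
end

section
/- Let K be a compact convex set and Δ a compact convex set satisfying the Riesz decomposition property for proper convex combinations (i.e., a Choquet simplex, via characterization (iii)). Suppose there exist affine (not necessarily continuous) maps φ : Δ → K and λ : K → Δ with φ ∘ λ = id_K. Then K also satisfies the Riesz decomposition property for proper convex combinations. -/
/-!
Push the two convex combinations of `K` into `Δ` along `g`, decompose them there, and pull the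
decomposition back along `f`: both maps preserve finite convex combinations, and `f ∘ g = id`
on `K` returns the original points.
-/

/-- The Riesz decomposition property for proper convex combinations in a convex
subset `K` of a real vector space. -/
def HasRieszDecomp {E : Type*} [AddCommGroup E] [Module ℝ E] (K : Set E) : Prop :=
  ∀ (n m : ℕ) (α : Fin n → ℝ) (β : Fin m → ℝ) (x : Fin n → E) (y : Fin m → E),
    (∀ j, 0 < α j) → (∀ i, 0 < β i) → ∑ j, α j = 1 → ∑ i, β i = 1 →
    (∀ j, x j ∈ K) → (∀ i, y i ∈ K) →
    ∑ j, α j • x j = ∑ i, β i • y i →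
    ∃ (γ : Fin m → Fin n → ℝ) (z : Fin m → Fin n → E),
      (∀ i j, 0 ≤ γ i j) ∧ (∀ i j, z i j ∈ K) ∧
      (∑ j, α j • x j) = ∑ i, ∑ j, γ i j • z i j ∧
      (∀ j, α j = ∑ i, γ i j) ∧ (∀ i, β i = ∑ j, γ i j) ∧
      (∀ j, x j = ∑ i, ((α j)⁻¹ * γ i j) • z i j) ∧
      (∀ i, y i = ∑ j, ((β i)⁻¹ * γ i j) • z i j)

open Finset

def IsAffineOn {E F : Type*} [AddCommGroup E] [Module ℝ E] [AddCommGroup F] [Module ℝ F]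
    (S : Set F) (f : F → E) : Prop :=
  ∀ a ∈ S, ∀ b ∈ S, ∀ t : ℝ, 0 ≤ t → t ≤ 1 → f ((1 - t) • a + t • b) = (1 - t) • f a + t • f b

namespace IsAffineOn

variable {ι E F : Type*} [AddCommGroup E] [Module ℝ E] [AddCommGroup F] [Module ℝ F]
  {S : Set F} {f : F → E}

theorem map_smul_add_smul (hf : IsAffineOn S f) {a b : F} (ha : a ∈ S) (hb : b ∈ S)
    {s t : ℝ} (hs : 0 ≤ s) (ht : 0 ≤ t) (hst : s + t = 1) :
    f (s • a + t • b) = s • f a + t • f b := by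
  obtain rfl : s = 1 - t := by linarith
  exact hf a ha b hb t ht (by linarith)

theorem convexOn_comp (hS : Convex ℝ S) (hf : IsAffineOn S f) (φ : Module.Dual ℝ E) :
    ConvexOn ℝ S (φ ∘ f) :=
  ⟨hS, fun _ ha _ hb _ _ hs ht hst => by
    simp [hf.map_smul_add_smul ha hb hs ht hst]⟩

theorem concaveOn_comp (hS : Convex ℝ S) (hf : IsAffineOn S f) (φ : Module.Dual ℝ E) :
    ConcaveOn ℝ S (φ ∘ f) :=
  ⟨hS, fun _ ha _ hb _ _ hs ht hst => by
    simp [hf.map_smul_add_smul ha hb hs ht hst]⟩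

/-- Jensen's inequality in both directions after composing with any linear functional; the
functionals of a vector space separate its points. -/
theorem map_sum_smul (hS : Convex ℝ S) (hf : IsAffineOn S f) {s : Finset ι} {w : ι → ℝ}
    {p : ι → F} (hw : ∀ i ∈ s, 0 ≤ w i) (hw1 : ∑ i ∈ s, w i = 1) (hp : ∀ i ∈ s, p i ∈ S) :
    f (∑ i ∈ s, w i • p i) = ∑ i ∈ s, w i • f (p i) := by
  rw [← sub_eq_zero, ← Module.forall_dual_apply_eq_zero_iff ℝ]
  intro φ
  have hφ : φ (f (∑ i ∈ s, w i • p i)) = ∑ i ∈ s, w i • φ (f (p i)) :=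
    le_antisymm ((hf.convexOn_comp hS φ).map_sum_le hw hw1 hp)
      ((hf.concaveOn_comp hS φ).le_map_sum hw hw1 hp)
  simp [hφ]

theorem map_sum_inv_mul_smul (hS : Convex ℝ S) (hf : IsAffineOn S f) {s : Finset ι}
    {c : ℝ} {w : ι → ℝ} {p : ι → F} (hc : 0 < c) (hcw : c = ∑ i ∈ s, w i)
    (hw : ∀ i ∈ s, 0 ≤ w i) (hp : ∀ i ∈ s, p i ∈ S) :
    f (∑ i ∈ s, (c⁻¹ * w i) • p i) = ∑ i ∈ s, (c⁻¹ * w i) • f (p i) :=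
  hf.map_sum_smul hS (fun i hi => mul_nonneg (inv_nonneg.mpr hc.le) (hw i hi))
    (by rw [← mul_sum, ← hcw, inv_mul_cancel₀ hc.ne']) hp

end IsAffineOn

theorem sum_smul_eq_sum_sum_of_eq_sum_inv_mul_smul {E : Type*} [AddCommGroup E] [Module ℝ E]
    {n m : ℕ} {α : Fin n → ℝ} {x : Fin n → E} {γ : Fin m → Fin n → ℝ} {z : Fin m → Fin n → E}
    (hα : ∀ j, α j ≠ 0) (hx : ∀ j, x j = ∑ i, ((α j)⁻¹ * γ i j) • z i j) :
    ∑ j, α j • x j = ∑ i, ∑ j, γ i j • z i j := by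
  simp_rw [hx, smul_sum, smul_smul, mul_inv_cancel_left₀ (hα _)]
  exact sum_comm

theorem riesz_decomposition_of_affine_retract_general
    {E F : Type*} [AddCommGroup E] [Module ℝ E]
    [AddCommGroup F] [Module ℝ F]
    (K : Set E) (hKconv : Convex ℝ K)
    (Δ : Set F) (hΔconv : Convex ℝ Δ)
    (f : F → E) (g : E → F)
    (hf : ∀ x ∈ Δ, f x ∈ K) (hg : ∀ x ∈ K, g x ∈ Δ)
    (hfaff : ∀ a ∈ Δ, ∀ b ∈ Δ, ∀ t : ℝ, 0 ≤ t → t ≤ 1 →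
      f ((1 - t) • a + t • b) = (1 - t) • f a + t • f b)
    (hgaff : ∀ a ∈ K, ∀ b ∈ K, ∀ t : ℝ, 0 ≤ t → t ≤ 1 →
      g ((1 - t) • a + t • b) = (1 - t) • g a + t • g b)
    (hfg : ∀ x ∈ K, f (g x) = x)
    (hΔ : HasRieszDecomp Δ) :
    HasRieszDecomp K := by
  intro n m α β x y hα hβ hα1 hβ1 hx hy hxy
  have hgxy : ∑ j, α j • g (x j) = ∑ i, β i • g (y i) := by
    rw [← IsAffineOn.map_sum_smul hKconv hgaff (fun j _ => (hα j).le) hα1 (fun j _ => hx j),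
      hxy, IsAffineOn.map_sum_smul hKconv hgaff (fun i _ => (hβ i).le) hβ1 (fun i _ => hy i)]
  obtain ⟨γ, w, hγ, hwΔ, -, hαγ, hβγ, hxw, hyw⟩ :=
    hΔ n m α β (g ∘ x) (g ∘ y) hα hβ hα1 hβ1 (fun j => hg _ (hx j)) (fun i => hg _ (hy i)) hgxy
  have hx' : ∀ j, x j = ∑ i, ((α j)⁻¹ * γ i j) • f (w i j) := fun j => by
    rw [← hfg _ (hx j), ← Function.comp_apply (f := g), hxw j,
      IsAffineOn.map_sum_inv_mul_smul hΔconv hfaff (hα j) (hαγ j) (fun i _ => hγ i j)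
        (fun i _ => hwΔ i j)]
  have hy' : ∀ i, y i = ∑ j, ((β i)⁻¹ * γ i j) • f (w i j) := fun i => by
    rw [← hfg _ (hy i), ← Function.comp_apply (f := g), hyw i,
      IsAffineOn.map_sum_inv_mul_smul hΔconv hfaff (hβ i) (hβγ i) (fun j _ => hγ i j)
        (fun j _ => hwΔ i j)]
  exact ⟨γ, fun i j => f (w i j), hγ, fun i j => hf _ (hwΔ i j),
    sum_smul_eq_sum_sum_of_eq_sum_inv_mul_smul (fun j => (hα j).ne') hx', hαγ, hβγ, hx', hy'⟩

/-- If `Δ` is a Choquet simplex (has the Riesz decomposition property for proper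
convex combinations) and there exist affine (not necessarily continuous) maps
`f : Δ → K` and `g : K → Δ` with `f ∘ g = id` on `K`, then `K` has the Riesz
decomposition property as well. -/
theorem riesz_decomposition_of_affine_retract
    {E F : Type*} [AddCommGroup E] [Module ℝ E] [TopologicalSpace E]
    [IsTopologicalAddGroup E] [ContinuousSMul ℝ E] [LocallyConvexSpace ℝ E]
    [AddCommGroup F] [Module ℝ F] [TopologicalSpace F]
    [IsTopologicalAddGroup F] [ContinuousSMul ℝ F] [LocallyConvexSpace ℝ F]
    (K : Set E) (hKc : IsCompact K) (hKconv : Convex ℝ K)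
    (Δ : Set F) (hΔc : IsCompact Δ) (hΔconv : Convex ℝ Δ)
    (f : F → E) (g : E → F)
    (hf : ∀ x ∈ Δ, f x ∈ K) (hg : ∀ x ∈ K, g x ∈ Δ)
    (hfaff : ∀ a ∈ Δ, ∀ b ∈ Δ, ∀ t : ℝ, 0 ≤ t → t ≤ 1 →
      f ((1 - t) • a + t • b) = (1 - t) • f a + t • f b)
    (hgaff : ∀ a ∈ K, ∀ b ∈ K, ∀ t : ℝ, 0 ≤ t → t ≤ 1 →
      g ((1 - t) • a + t • b) = (1 - t) • g a + t • g b)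
    (hfg : ∀ x ∈ K, f (g x) = x)
    (hΔ : HasRieszDecomp Δ) :
    HasRieszDecomp K :=
  riesz_decomposition_of_affine_retract_general K hKconv Δ hΔconv f g hf hg hfaff hgaff hfg hΔ
end

section
/- Let K be a compact convex set satisfying the Riesz decomposition property for proper convex combinations. If x ∈ K is written as two convex combinations of distinct extreme points, x = Σ_{i=1}^n α_i x_i = Σ_{j=1}^m β_j y_j with all α_i, β_j > 0, x_1,...,x_n distinct extreme points and y_1,...,y_m distinct extreme points, then n = m, {x_1,...,x_n} = {y_1,...,y_m}, and the corresponding coefficients agree. -/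
theorem Convex.eq_of_mem_extremePoints_of_sum_smul_eq
    {𝕜 E ι : Type*} [Field 𝕜] [LinearOrder 𝕜] [IsStrictOrderedRing 𝕜] [AddCommGroup E]
    [Module 𝕜 E] [Fintype ι] {K : Set E} (hK : Convex 𝕜 K) {e : E}
    (he : e ∈ K.extremePoints 𝕜) {w : ι → 𝕜} {p : ι → E} (hw₀ : ∀ j, 0 ≤ w j)
    (hw₁ : ∑ j, w j = 1) (hp : ∀ j, p j ∈ K) (hsum : ∑ j, w j • p j = e) {i : ι}
    (hi : 0 < w i) : p i = e := by
  classical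
  -- Moving only half of the weight of `p i` leaves positive mass for the rest even if `w i = 1`.
  set t := w i / 2 with ht
  set w' : ι → 𝕜 := fun j => w j - if j = i then t else 0
  have hw'₀ : ∀ j, 0 ≤ w' j := by
    intro j; by_cases hj : j = i <;> simp [w', hj, t] <;> linarith [hw₀ j]
  have hw'sum : ∑ j, w' j = 1 - t := by simp [w', Finset.sum_sub_distrib, hw₁]
  have ht1 : t < 1 := by
    have := Finset.single_le_sum (fun j _ => hw₀ j) (Finset.mem_univ i)
    rw [ht]; linarith
  have hb : Finset.univ.centerMass w' p ∈ K :=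
    hK.centerMass_mem (fun j _ => hw'₀ j) (by rw [hw'sum]; linarith) (fun j _ => hp j)
  have hseg : e ∈ openSegment 𝕜 (p i) (Finset.univ.centerMass w' p) := by
    refine ⟨t, 1 - t, by positivity, by linarith, by ring, ?_⟩
    rw [Finset.centerMass, hw'sum, smul_smul, mul_inv_cancel₀ (by linarith), one_smul]
    simp [w', sub_smul, Finset.sum_sub_distrib, hsum, ite_smul]
  exact ((mem_extremePoints.1 he).2 _ (hp i) _ hb hseg).1

theorem exists_equiv_of_forall_ne_zero_eq {ι κ E M : Type*} [Fintype ι] [Fintype κ]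
    [AddCommMonoid M] {γ : κ → ι → M} {x : ι → E} {y : κ → E}
    (hx : Function.Injective x) (hy : Function.Injective y)
    (hcol : ∀ j, ∑ i, γ i j ≠ 0) (hrow : ∀ i, ∑ j, γ i j ≠ 0)
    (hsupp : ∀ i j, γ i j ≠ 0 → y i = x j) :
    ∃ σ : ι ≃ κ, ∀ j, y (σ j) = x j ∧ ∑ j', γ (σ j) j' = ∑ i, γ i j := by
  choose σ hσ using fun j => Finset.exists_ne_zero_of_sum_ne_zero (hcol j)
  choose τ hτ using fun i => Finset.exists_ne_zero_of_sum_ne_zero (hrow i)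
  have hyσ : ∀ j, y (σ j) = x j := fun j => hsupp _ _ (hσ j).2
  have hxτ : ∀ i, x (τ i) = y i := fun i => (hsupp _ _ (hτ i).2).symm
  refine ⟨⟨σ, τ, fun j => hx (by rw [hxτ, hyσ]), fun i => hy (by rw [hyσ, hxτ])⟩,
    fun j => ⟨hyσ j, ?_⟩⟩
  have hrow_single : ∀ j', j' ≠ j → γ (σ j) j' = 0 := fun j' hj' =>
    by_contra fun h => hj' (hx (by rw [← hsupp _ _ h, hyσ]))
  have hcol_single : ∀ i, i ≠ σ j → γ i j = 0 := fun i hi =>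
    by_contra fun h => hi (hy (by rw [hsupp _ _ h, hyσ]))
  dsimp only [Equiv.coe_fn_mk]
  rw [Finset.sum_eq_single j (fun j' _ => hrow_single j') (by simp),
    Finset.sum_eq_single (σ j) (fun i _ => hcol_single i) (by simp)]

theorem unique_representation_of_extreme_points_general
    {E : Type*} [AddCommGroup E] [Module ℝ E]
    (K : Set E) (hKconv : Convex ℝ K)
    (hK : HasRieszDecomp K)
    (n m : ℕ) (α : Fin n → ℝ) (β : Fin m → ℝ) (x : Fin n → E) (y : Fin m → E)
    (hα : ∀ i, 0 < α i) (hβ : ∀ j, 0 < β j)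
    (hα1 : ∑ i, α i = 1) (hβ1 : ∑ j, β j = 1)
    (hx : ∀ i, x i ∈ Set.extremePoints ℝ K) (hy : ∀ j, y j ∈ Set.extremePoints ℝ K)
    (hxinj : Function.Injective x) (hyinj : Function.Injective y)
    (heq : ∑ i, α i • x i = ∑ j, β j • y j) :
    ∃ σ : Fin n ≃ Fin m, ∀ i, y (σ i) = x i ∧ β (σ i) = α i := by
  obtain ⟨γ, z, hγ₀, hzK, -, hαγ, hβγ, hxz, hyz⟩ :=
    hK n m α β x y hα hβ hα1 hβ1 (fun i => (hx i).1) (fun j => (hy j).1) heq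
  have hsupp : ∀ i j, γ i j ≠ 0 → y i = x j := by
    intro i j hij
    have hpos : 0 < γ i j := (hγ₀ i j).lt_of_ne' hij
    have hzx : z i j = x j :=
      hKconv.eq_of_mem_extremePoints_of_sum_smul_eq (hx j)
        (fun i' => mul_nonneg (inv_nonneg.2 (hα j).le) (hγ₀ i' j))
        (by rw [← Finset.mul_sum, ← hαγ j, inv_mul_cancel₀ (hα j).ne'])
        (fun i' => hzK i' j) (hxz j).symm (mul_pos (inv_pos.2 (hα j)) hpos)
    have hzy : z i j = y i :=
      hKconv.eq_of_mem_extremePoints_of_sum_smul_eq (hy i)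
        (fun j' => mul_nonneg (inv_nonneg.2 (hβ i).le) (hγ₀ i j'))
        (by rw [← Finset.mul_sum, ← hβγ i, inv_mul_cancel₀ (hβ i).ne'])
        (fun j' => hzK i j') (hyz i).symm (mul_pos (inv_pos.2 (hβ i)) hpos)
    rw [← hzx, hzy]
  obtain ⟨σ, hσ⟩ := exists_equiv_of_forall_ne_zero_eq hxinj hyinj
    (fun j => hαγ j ▸ (hα j).ne') (fun i => hβγ i ▸ (hβ i).ne') hsupp
  exact ⟨σ, fun j => ⟨(hσ j).1, by rw [hβγ, hαγ, (hσ j).2]⟩⟩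

/-- In a compact convex set with the Riesz decomposition property, a point has at most
one representation as a proper convex combination of distinct extreme points: the two
families coincide up to a bijection matching both points and coefficients. -/
theorem unique_representation_of_extreme_points
    {E : Type*} [AddCommGroup E] [Module ℝ E] [TopologicalSpace E]
    [IsTopologicalAddGroup E] [ContinuousSMul ℝ E] [LocallyConvexSpace ℝ E]
    (K : Set E) (hKc : IsCompact K) (hKconv : Convex ℝ K)
    (hK : HasRieszDecomp K)
    (n m : ℕ) (α : Fin n → ℝ) (β : Fin m → ℝ) (x : Fin n → E) (y : Fin m → E)
    (hα : ∀ i, 0 < α i) (hβ : ∀ j, 0 < β j)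
    (hα1 : ∑ i, α i = 1) (hβ1 : ∑ j, β j = 1)
    (hx : ∀ i, x i ∈ Set.extremePoints ℝ K) (hy : ∀ j, y j ∈ Set.extremePoints ℝ K)
    (hxinj : Function.Injective x) (hyinj : Function.Injective y)
    (heq : ∑ i, α i • x i = ∑ j, β j • y j) :
    ∃ σ : Fin n ≃ Fin m, ∀ i, y (σ i) = x i ∧ β (σ i) = α i :=
  unique_representation_of_extreme_points_general K hKconv hK n m α β x y hα hβ hα1 hβ1 hx hy hxinj
    hyinj heq
end
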